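/- Let (Ω, P) be a probability space and let X : Fin 2 × Fin 2 → Fin N → Ω → ℝ be a mutually independent family of random variables, each taking values in {−1, 1}, with common mean μ(i,j) within each family (i,j). Let S = μ(0,0) + μ(1,0) + μ(0,1) − μ(1,1) and S̄ = m(0,0) + m(1,0) + m(0,1) − m(1,1) with m(i,j) = (1/N) ∑ₖ X (i,j) k. If additionally S ≥ 2, then for every ε > 0, P[|S̄ − S| > ε] ≤ 3/(N ε²); in particular N ≥ 3/(δ ε²) suffices to guarantee P[|S̄ − S| > ε] ≤ δ for any 0 < δ < 1. -/

import Mathlib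

/-!
Write `S̄ = ∑ₚ (σ p.1 / N) X p` with the CHSH signs `σ = ±1`. It is an unbiased estimator of
`S`, and by independence and the Bhatia–Davis bound `Var X ≤ (1 - E X)(E X + 1)` for
`[-1, 1]`-valued variables, `Var S̄ ≤ ∑ᵢⱼ (1 - μᵢⱼ²) / N`. Cauchy–Schwarz against the signs gives
`∑ μᵢⱼ² ≥ S² / 4`, so `Var S̄ ≤ (4 - S² / 4) / N ≤ 3 / N` once `S ≥ 2`, and Chebyshev's
inequality concludes.
-/

open MeasureTheory ProbabilityTheory Finset

noncomputable section

/-- Empirical mean `m(i,j) = (1/N) ∑ₖ X (i,j) k`. -/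
def empMean {Ω : Type*} {N : ℕ} (X : Fin 2 × Fin 2 → Fin N → Ω → ℝ)
    (ij : Fin 2 × Fin 2) (ω : Ω) : ℝ :=
  (1 / N) * ∑ k, X ij k ω

/-- Empirical CHSH estimate `S̄ = m(0,0) + m(1,0) + m(0,1) − m(1,1)`. -/
def SbarEmp {Ω : Type*} {N : ℕ} (X : Fin 2 × Fin 2 → Fin N → Ω → ℝ) (ω : Ω) : ℝ :=
  empMean X (0, 0) ω + empMean X (1, 0) ω + empMean X (0, 1) ω - empMean X (1, 1) ω

/-- True CHSH value `S = μ(0,0) + μ(1,0) + μ(0,1) − μ(1,1)`. -/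
def Strue (μ : Fin 2 × Fin 2 → ℝ) : ℝ := μ (0, 0) + μ (1, 0) + μ (0, 1) - μ (1, 1)

end

namespace ProbabilityTheory

variable {Ω : Type*} [MeasurableSpace Ω] {P : Measure Ω}

lemma variance_le_one_sub_sq [IsProbabilityMeasure P] {Y : Ω → ℝ} (hY : AEMeasurable Y P)
    (hbd : ∀ ω, |Y ω| ≤ 1) : Var[Y; P] ≤ 1 - P[Y] ^ 2 :=
  calc Var[Y; P] ≤ (1 - P[Y]) * (P[Y] - -1) :=
        variance_le_sub_mul_sub (ae_of_all _ fun ω => abs_le.mp (hbd ω)) hY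
    _ = 1 - P[Y] ^ 2 := by ring

lemma iIndepFun.variance_sum_const_mul {ι : Type*} [Fintype ι] {Y : ι → Ω → ℝ}
    (hindep : iIndepFun Y P) (hY : ∀ i, MemLp (Y i) 2 P) (c : ι → ℝ) :
    Var[fun ω => ∑ i, c i * Y i ω; P] = ∑ i, c i ^ 2 * Var[Y i; P] := by
  have hcY : iIndepFun (fun i ω => c i * Y i ω) P :=
    hindep.comp (fun i x => c i * x) fun i => measurable_const_mul _
  rw [← Finset.sum_fn, IndepFun.variance_sum (fun i _ => (hY i).const_mul (c i))
    fun i _ j _ hij => hcY.indepFun hij]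
  exact Finset.sum_congr rfl fun i _ => variance_const_mul _ _ _

lemma measureReal_lt_abs_sub_integral_le [IsFiniteMeasure P] {Y : Ω → ℝ} (hY : MemLp Y 2 P)
    {v ε : ℝ} (hv : Var[Y; P] ≤ v) (hε : 0 < ε) :
    P.real {ω | ε < |Y ω - P[Y]|} ≤ v / ε ^ 2 :=
  calc P.real {ω | ε < |Y ω - P[Y]|} ≤ P.real {ω | ε ≤ |Y ω - P[Y]|} :=
        measureReal_mono fun _ hω => Set.mem_ofPred.mpr (le_of_lt hω)
    _ ≤ Var[Y; P] / ε ^ 2 :=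
        ENNReal.toReal_le_of_le_ofReal (div_nonneg (variance_nonneg _ _) (sq_nonneg _))
          (meas_ge_le_variance_div_sq hY hε)
    _ ≤ v / ε ^ 2 := by gcongr

end ProbabilityTheory

def chshSign (ij : Fin 2 × Fin 2) : ℝ := if ij = (1, 1) then -1 else 1

lemma chshSign_sq (ij : Fin 2 × Fin 2) : chshSign ij ^ 2 = 1 := by
  unfold chshSign; split_ifs <;> norm_num

lemma Strue_eq_sum_chshSign_mul (μ : Fin 2 × Fin 2 → ℝ) :
    Strue μ = ∑ ij, chshSign ij * μ ij := by
  simp [Strue, chshSign, Fintype.sum_prod_type, Fin.sum_univ_two, Prod.ext_iff]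
  ring

lemma Strue_sq_le_four_mul_sum_sq (μ : Fin 2 × Fin 2 → ℝ) :
    Strue μ ^ 2 ≤ 4 * ∑ ij, μ ij ^ 2 :=
  calc Strue μ ^ 2 ≤ (∑ ij, chshSign ij ^ 2) * ∑ ij, μ ij ^ 2 := by
        rw [Strue_eq_sum_chshSign_mul]; exact sum_mul_sq_le_sq_mul_sq _ _ _
    _ = 4 * ∑ ij, μ ij ^ 2 := by simp [chshSign_sq]

lemma SbarEmp_eq_sum {Ω : Type*} {N : ℕ} (X : Fin 2 × Fin 2 → Fin N → Ω → ℝ) :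
    SbarEmp X = fun ω => ∑ p : (Fin 2 × Fin 2) × Fin N, chshSign p.1 / N * X p.1 p.2 ω := by
  funext ω
  simp only [SbarEmp, empMean, chshSign, Fintype.sum_prod_type, Fin.sum_univ_two, mul_sum]
  simp only [Prod.mk.injEq, Fin.isValue, zero_ne_one, and_self, and_false, and_true,
    if_false, if_true, one_div, neg_div, neg_mul, sum_neg_distrib]
  ring

section Estimator

variable {Ω : Type*} [MeasurableSpace Ω] {P : Measure Ω} {N : ℕ}
  {X : Fin 2 × Fin 2 → Fin N → Ω → ℝ} {μ : Fin 2 × Fin 2 → ℝ}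

lemma memLp_SbarEmp (hmem : ∀ ij k, MemLp (X ij k) 2 P) : MemLp (SbarEmp X) 2 P := by
  rw [SbarEmp_eq_sum]
  exact memLp_finsetSum _ fun p _ => (hmem p.1 p.2).const_mul _

lemma integral_SbarEmp [IsProbabilityMeasure P] (hN : 0 < N)
    (hmem : ∀ ij k, MemLp (X ij k) 2 P) (hmean : ∀ ij k, P[X ij k] = μ ij) :
    P[SbarEmp X] = Strue μ := by
  rw [SbarEmp_eq_sum,
    integral_finsetSum _ fun p _ => ((hmem p.1 p.2).integrable one_le_two).const_mul _]
  simp only [integral_const_mul, hmean, Fintype.sum_prod_type, sum_const, card_univ,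
    Fintype.card_fin, nsmul_eq_mul, Strue_eq_sum_chshSign_mul]
  have hN' : (N : ℝ) ≠ 0 := by positivity
  refine sum_congr rfl fun i _ => sum_congr rfl fun j _ => ?_
  field_simp

lemma variance_SbarEmp_le [IsProbabilityMeasure P] (hN : 0 < N)
    (hindep : iIndepFun (fun p : (Fin 2 × Fin 2) × Fin N => X p.1 p.2) P)
    (hmem : ∀ ij k, MemLp (X ij k) 2 P) (hbd : ∀ ij k ω, |X ij k ω| ≤ 1)
    (hmean : ∀ ij k, P[X ij k] = μ ij) :
    Var[SbarEmp X; P] ≤ (4 - Strue μ ^ 2 / 4) / N := by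
  have hvar (p : (Fin 2 × Fin 2) × Fin N) : Var[X p.1 p.2; P] ≤ 1 - μ p.1 ^ 2 :=
    hmean p.1 p.2 ▸ variance_le_one_sub_sq (hmem p.1 p.2).aemeasurable (hbd p.1 p.2)
  rw [SbarEmp_eq_sum, hindep.variance_sum_const_mul (fun p => hmem p.1 p.2)]
  calc ∑ p : (Fin 2 × Fin 2) × Fin N, (chshSign p.1 / N) ^ 2 * Var[X p.1 p.2; P]
      ≤ ∑ p : (Fin 2 × Fin 2) × Fin N, (1 - μ p.1 ^ 2) / N ^ 2 := by
        gcongr with p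
        rw [div_pow, chshSign_sq, one_div_mul_eq_div]
        exact div_le_div_of_nonneg_right (hvar p) (by positivity)
    _ = (4 - ∑ ij, μ ij ^ 2) / N := by
        simp only [Fintype.sum_prod_type, sum_const, card_univ, Fintype.card_fin, nsmul_eq_mul,
          Fin.sum_univ_two]
        field_simp
        ring
    _ ≤ (4 - Strue μ ^ 2 / 4) / N := by
        gcongr; linarith [Strue_sq_le_four_mul_sum_sq μ]

end Estimator

theorem chebyshev_chsh_estimate_nonlocal {Ω : Type*} [MeasurableSpace Ω]
    (P : Measure Ω) [IsProbabilityMeasure P] (N : ℕ) (hN : 0 < N)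
    (X : Fin 2 × Fin 2 → Fin N → Ω → ℝ)
    (hmeas : ∀ ij k, Measurable (X ij k))
    (hindep : iIndepFun
      (fun p : (Fin 2 × Fin 2) × Fin N => X p.1 p.2) P)
    (hval : ∀ ij k ω, X ij k ω = 1 ∨ X ij k ω = -1)
    (μ : Fin 2 × Fin 2 → ℝ)
    (hmean : ∀ ij k, ∫ ω, X ij k ω ∂P = μ ij)
    (hS : Strue μ ≥ 2) :
    (∀ ε : ℝ, 0 < ε →
      (P {ω | ε < |SbarEmp X ω - Strue μ|}).toReal ≤ 3 / (N * ε ^ 2)) ∧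
    (∀ ε δ : ℝ, 0 < ε → 0 < δ → δ < 1 →
      (N : ℝ) ≥ 3 / (δ * ε ^ 2) →
      (P {ω | ε < |SbarEmp X ω - Strue μ|}).toReal ≤ δ) := by
  have hbd : ∀ ij k ω, |X ij k ω| ≤ 1 := fun ij k ω => by
    rcases hval ij k ω with h | h <;> simp [h]
  have hmem : ∀ ij k, MemLp (X ij k) 2 P := fun ij k =>
    MemLp.of_bound (hmeas ij k).aestronglyMeasurable 1
      (ae_of_all _ fun ω => by simpa using hbd ij k ω)
  have hvar : Var[SbarEmp X; P] ≤ 3 / N :=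
    (variance_SbarEmp_le hN hindep hmem hbd hmean).trans (by gcongr; nlinarith)
  have hcheb (ε : ℝ) (hε : 0 < ε) :
      P.real {ω | ε < |SbarEmp X ω - Strue μ|} ≤ 3 / (N * ε ^ 2) := by
    simpa only [integral_SbarEmp hN hmem hmean, div_div] using
      measureReal_lt_abs_sub_integral_le (memLp_SbarEmp hmem) hvar hε
  refine ⟨hcheb, fun ε δ hε hδ _ hNδ => (hcheb ε hε).trans ?_⟩
  rw [ge_iff_le, div_le_iff₀ (by positivity)] at hNδ
  rw [div_le_iff₀ (by positivity)]
  linarith
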